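/- For k ≥ 2 and N > 2k, the polygamous sum of squared violation factors strictly exceeds the GHZ value: 2^(−(N−k+1))·C(N,k)·A(N,k,⌈k/2⌉)² > 2^(N−k−1); for k = 2 this reduces to C(N,2)·(2^(N−1)/N)²·2^(−(N−1)) > 2^(N−3), i.e., (N−1)/(2N) · 2^(N−1) > 2^(N−3), equivalently 2(N−1) > N. -/

import Mathlib

/-!
Write `s = ⌈k/2⌉`, `t = k - s`, so `s, t ≥ 1` and `s + 2t < N`. The powers of two reduce the claim to
`C(N,s) C(N,t) < C(N,k) C(k,s)²`, and since `C(N,k) C(k,s) = C(N,s) C(N-s,t)` this is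
`C(N,t) < C(k,s) C(N-s,t)`. Expand `C(N,t) = ∑ C(s,i) C(N-s,t-i)` by Vandermonde: as
`t ≤ (N-s)/2`, every `C(N-s,t-i)` is at most `C(N-s,t)`, strictly so for `i = 1`, and
`∑_{i ≤ t} C(s,i) ≤ ∑ C(s,i) C(t,t-i) = C(k,s)`.
-/

open Finset

noncomputable def A (N k s : ℕ) : ℝ :=
  2 ^ (N - k) * (Nat.choose k s : ℝ) /
    Real.sqrt ((Nat.choose N s : ℝ) * (Nat.choose N (k - s) : ℝ))

namespace Nat

theorem choose_le_choose_of_le_of_le_half {m j t : ℕ} (hjt : j ≤ t) (ht : t ≤ m / 2) :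
    m.choose j ≤ m.choose t := by
  induction hjt using Nat.decreasingInduction with
  | self => rfl
  | of_succ r hr ih => exact (choose_le_succ_of_lt_half_left (hr.trans_le ht)).trans ih

theorem choose_lt_choose_succ {m r : ℕ} (h : 2 * (r + 1) ≤ m) :
    m.choose r < m.choose (r + 1) := by
  refine Nat.lt_of_mul_lt_mul_right (a := r + 1) ?_
  rw [choose_succ_right_eq]
  exact Nat.mul_lt_mul_of_pos_left (by omega) (choose_pos (by omega))

theorem sum_choose_antidiagonal_le (s t : ℕ) :
    ∑ ij ∈ antidiagonal t, s.choose ij.1 ≤ (s + t).choose s := by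
  rw [choose_symm_add, add_choose_eq]
  refine sum_le_sum fun ij hij => Nat.le_mul_of_pos_right _ (choose_pos ?_)
  rw [HasAntidiagonal.mem_antidiagonal] at hij
  omega

theorem add_choose_lt_choose_mul_choose {s t m : ℕ} (hs : 1 ≤ s) (ht : 1 ≤ t)
    (htm : 2 * t ≤ m) : (s + m).choose t < (s + t).choose s * m.choose t := by
  calc (s + m).choose t = ∑ ij ∈ antidiagonal t, s.choose ij.1 * m.choose ij.2 :=
        add_choose_eq s m t
    _ < ∑ ij ∈ antidiagonal t, s.choose ij.1 * m.choose t := by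
      refine sum_lt_sum (fun ij hij => ?_) ⟨(1, t - 1), by rw [HasAntidiagonal.mem_antidiagonal]; omega, ?_⟩
      · rw [HasAntidiagonal.mem_antidiagonal] at hij
        exact Nat.mul_le_mul_left _ (choose_le_choose_of_le_of_le_half (by omega) (by omega))
      · have hlt : m.choose (t - 1) < m.choose t := by
          simpa [Nat.sub_add_cancel ht] using choose_lt_choose_succ (m := m) (r := t - 1) (by omega)
        simpa using Nat.mul_lt_mul_of_pos_left hlt (by omega : 0 < s)
    _ = (∑ ij ∈ antidiagonal t, s.choose ij.1) * m.choose t := (sum_mul ..).symm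
    _ ≤ (s + t).choose s * m.choose t := Nat.mul_le_mul_right _ (sum_choose_antidiagonal_le s t)

theorem choose_mul_choose_lt {N s t : ℕ} (hs : 1 ≤ s) (ht : 1 ≤ t) (hN : s + 2 * t ≤ N) :
    N.choose s * N.choose t < N.choose (s + t) * (s + t).choose s ^ 2 := by
  obtain ⟨m, rfl⟩ : ∃ m, N = s + m := ⟨N - s, by omega⟩
  have hfactor : (s + m).choose (s + t) * (s + t).choose s = (s + m).choose s * m.choose t := by
    simpa using choose_mul (n := s + m) (k := s + t) (s := s) (by omega)
  calc (s + m).choose s * (s + m).choose t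
      < (s + m).choose s * ((s + t).choose s * m.choose t) :=
        Nat.mul_lt_mul_of_pos_left (add_choose_lt_choose_mul_choose hs ht (by omega))
          (choose_pos (by omega))
    _ = (s + m).choose (s + t) * (s + t).choose s ^ 2 := by
      rw [sq, ← mul_assoc ((s + m).choose (s + t)), hfactor]; ring

end Nat

theorem A_sq (N k s : ℕ) :
    A N k s ^ 2 = ((2 : ℝ) ^ (N - k)) ^ 2 * (k.choose s : ℝ) ^ 2 /
      ((N.choose s : ℝ) * (N.choose (k - s) : ℝ)) := by
  rw [A, div_pow, mul_pow, Real.sq_sqrt (by positivity)]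

theorem two_rpow_neg_mul_two_pow_sq {N k : ℕ} (hkN : k ≤ N) :
    (2 : ℝ) ^ (-((N : ℝ) - k + 1)) * ((2 : ℝ) ^ (N - k)) ^ 2 = (2 : ℝ) ^ ((N : ℝ) - k - 1) := by
  rw [← pow_mul, ← Real.rpow_natCast, ← Real.rpow_add two_pos]
  congr 1
  push_cast [Nat.cast_sub hkN]
  ring

/-- For k ≥ 2 and N > 2k, the polygamous sum of squared violation factors
strictly exceeds the GHZ value 2^(N−k−1). -/
theorem stmt16 (N k : ℕ) (hk : 2 ≤ k) (hN : 2 * k < N) :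
    (2 : ℝ) ^ (-((N : ℝ) - k + 1)) * (Nat.choose N k : ℝ) * (A N k ((k + 1) / 2)) ^ 2 >
      (2 : ℝ) ^ ((N : ℝ) - k - 1) := by
  set s := (k + 1) / 2
  have hkey := Nat.choose_mul_choose_lt (N := N) (s := s) (t := k - s)
    (by omega) (by omega) (by omega)
  rw [show s + (k - s) = k by omega] at hkey
  have hden : (0 : ℝ) < N.choose s * N.choose (k - s) := by
    have := Nat.choose_pos (n := N) (k := s) (by omega)
    have := Nat.choose_pos (n := N) (k := k - s) (by omega)
    positivity
  have hratio : 1 < (N.choose k * k.choose s ^ 2 : ℝ) / (N.choose s * N.choose (k - s)) := by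
    rw [one_lt_div hden]
    exact_mod_cast hkey
  calc (2 : ℝ) ^ ((N : ℝ) - k - 1)
      < 2 ^ ((N : ℝ) - k - 1) * ((N.choose k * k.choose s ^ 2 : ℝ) /
          (N.choose s * N.choose (k - s))) :=
        lt_mul_of_one_lt_right (by positivity) hratio
    _ = _ := by rw [A_sq, ← two_rpow_neg_mul_two_pow_sq (by omega : k ≤ N)]; ring
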